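/- arXiv:2003.06415 — 3 statements merged into one kernel-verified Lean document; each statement's English description precedes it below -/
import Mathlib

section
/- Let N ≥ 1 be an integer, let 0 < δ < ε < 1 and Γ ∈ (0,1] be reals with Γ ≥ sqrt(ln(1/δ) / ((ε−δ)² · N)). On a probability space, let A_1, …, A_N be mutually independent events and let B_1, …, B_N be events with P(B_i) ≥ Γ > 0 and P(A_i | B_i) ≥ 1−δ for every i (in particular P(A_i) ≥ (1−δ)Γ for every i). Then the probability that at least (1−ε)·Γ·N of the events A_1, …, A_N occur is at least 1−δ. -/
/-!
The centred indicators `μ(A i) - 1_{A i}` are independent and take values in an interval of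
length one, so by Hoeffding's lemma they are sub-Gaussian with parameter `1/4`. Hoeffding's
inequality then bounds the probability that at most `∑ μ(A i) - t` of the events occur by
`exp (-2 t² / N)`. Since `∑ μ(A i) ≥ (1 - δ) Γ N`, taking `t = (ε - δ) Γ N` covers the complement
of the event in question, and the lower bound on `Γ` makes `exp (-2 t² / N) ≤ δ`.
-/

open MeasureTheory ProbabilityTheory Real

section

variable {Ω ι : Type*} {A : ι → Set Ω} [Fintype ι]

lemma ncard_setOf_mem_eq_sum_indicator (ω : Ω) :
    ({i | ω ∈ A i}.ncard : ℝ) = ∑ i, (A i).indicator 1 ω := by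
  classical
  rw [Set.ncard_eq_toFinset_card', Set.toFinset_ofPred, Finset.card_filter, Nat.cast_sum]
  refine Finset.sum_congr rfl fun i _ => ?_
  by_cases h : ω ∈ A i <;> simp [h]

variable [MeasurableSpace Ω] {μ : Measure Ω} [IsProbabilityMeasure μ]

lemma hasSubgaussianMGF_measureReal_sub_indicator {s : Set Ω} (hs : MeasurableSet s) :
    HasSubgaussianMGF (fun ω => μ.real s - s.indicator 1 ω) (1 / 4) μ := by
  have h := hasSubgaussianMGF_of_mem_Icc (μ := μ) (X := -s.indicator 1) (a := -1) (b := 0)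
    (measurable_const.indicator hs).neg.aemeasurable
    (ae_of_all _ fun ω => by by_cases h : ω ∈ s <;> simp [h])
  convert h using 1
  · ext ω
    simp only [Pi.neg_apply, integral_neg, integral_indicator_one hs, sub_neg_eq_add]
    ring
  · norm_num

lemma measureReal_ncard_le_sum_sub_le (hA : ∀ i, MeasurableSet (A i))
    (hindep : iIndepSet A μ) {t : ℝ} (ht : 0 ≤ t) :
    μ.real {ω | ({i | ω ∈ A i}.ncard : ℝ) ≤ ∑ i, μ.real (A i) - t}
      ≤ exp (-2 * t ^ 2 / Fintype.card ι) := by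
  have hindep' : iIndepFun (fun i ω => μ.real (A i) - (A i).indicator 1 ω) μ :=
    hindep.iIndepFun_indicator.comp (fun i x => μ.real (A i) - x) fun i => by fun_prop
  have hsub : {ω | ({i | ω ∈ A i}.ncard : ℝ) ≤ ∑ i, μ.real (A i) - t}
      ⊆ {ω | t ≤ ∑ i, (μ.real (A i) - (A i).indicator 1 ω)} := fun ω hω => by
    simp only [Set.mem_ofPred_eq, ncard_setOf_mem_eq_sum_indicator] at hω ⊢
    rw [Finset.sum_sub_distrib]
    linarith
  calc _ ≤ _ := measureReal_mono hsub
    _ ≤ _ := HasSubgaussianMGF.measure_sum_ge_le_of_iIndepFun hindep' (s := Finset.univ)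
        (fun i _ => hasSubgaussianMGF_measureReal_sub_indicator (hA i)) ht
    _ = exp (-2 * t ^ 2 / Fintype.card ι) := by
      rw [Finset.sum_const, Finset.card_univ, nsmul_eq_mul]
      congr 1
      push_cast
      ring

end

theorem stmt_0_general {Ω : Type*} [MeasurableSpace Ω] (μ : Measure Ω) [IsProbabilityMeasure μ]
    (N : ℕ) (hN : 1 ≤ N) (δ ε Γ : ℝ)
    (hδpos : 0 < δ) (hδε : δ < ε) (hε1 : ε < 1)
    (hΓ : Γ ≥ Real.sqrt (Real.log (1 / δ) / ((ε - δ) ^ 2 * N)))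
    (A : Fin N → Set Ω)
    (hAmeas : ∀ i, MeasurableSet (A i))
    (hindep : iIndepSet A μ)
    (hPA : ∀ i, (1 - δ) * Γ ≤ (μ (A i)).toReal) :
    1 - δ ≤
      (μ {ω | (1 - ε) * Γ * N ≤ (Set.ncard {i : Fin N | ω ∈ A i} : ℝ)}).toReal := by
  have hNpos : (0 : ℝ) < N := by exact_mod_cast hN
  obtain ⟨hΓ0, hΓsq⟩ := Real.sqrt_le_iff.mp hΓ
  rw [div_le_iff₀ (by positivity)] at hΓsq
  have hlog : 0 ≤ log (1 / δ) := log_nonneg (by rw [le_div_iff₀ hδpos]; linarith)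
  set t := (ε - δ) * Γ * N
  have hmean : (1 - δ) * Γ * N ≤ ∑ i, μ.real (A i) := by
    simpa [mul_comm, measureReal_def] using Finset.sum_le_sum fun i (_ : i ∈ Finset.univ) => hPA i
  have htail : exp (-2 * t ^ 2 / Fintype.card (Fin N)) ≤ δ := by
    calc exp (-2 * t ^ 2 / Fintype.card (Fin N)) ≤ exp (-log (1 / δ)) := by
          rw [Fintype.card_fin, exp_le_exp, div_le_iff₀ hNpos]
          nlinarith
      _ = δ := by rw [one_div, log_inv, neg_neg, exp_log hδpos]
  set good := {ω | (1 - ε) * Γ * N ≤ (Set.ncard {i : Fin N | ω ∈ A i} : ℝ)}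
  have hbad : goodᶜ ⊆ {ω | ({i | ω ∈ A i}.ncard : ℝ) ≤ ∑ i, μ.real (A i) - t} := fun ω hω => by
    simp only [good, Set.mem_compl_iff, Set.mem_ofPred_eq, not_le] at hω ⊢
    linarith
  have hcover := measureReal_union_le (μ := μ) good goodᶜ
  rw [Set.union_compl_self, probReal_univ] at hcover
  have hbad_le := (measureReal_mono hbad).trans
    ((measureReal_ncard_le_sum_sub_le hAmeas hindep (by positivity)).trans htail)
  rw [← measureReal_def]
  linarith

/-- Hoeffding/collision-counting core of part P1 of the paper's Lemma 1. -/
theorem stmt_0 {Ω : Type*} [MeasurableSpace Ω] (μ : Measure Ω) [IsProbabilityMeasure μ]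
    (N : ℕ) (hN : 1 ≤ N) (δ ε Γ : ℝ)
    (hδpos : 0 < δ) (hδε : δ < ε) (hε1 : ε < 1) (hΓpos : 0 < Γ) (hΓ1 : Γ ≤ 1)
    (hΓ : Γ ≥ Real.sqrt (Real.log (1 / δ) / ((ε - δ) ^ 2 * N)))
    (A B : Fin N → Set Ω)
    (hAmeas : ∀ i, MeasurableSet (A i)) (hBmeas : ∀ i, MeasurableSet (B i))
    (hindep : iIndepSet A μ)
    (hPB : ∀ i, Γ ≤ (μ (B i)).toReal)
    (hcond : ∀ i, 1 - δ ≤ ((μ[|B i]) (A i)).toReal)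
    (hPA : ∀ i, (1 - δ) * Γ ≤ (μ (A i)).toReal) :
    1 - δ ≤
      (μ {ω | (1 - ε) * Γ * N ≤ (Set.ncard {i : Fin N | ω ∈ A i} : ℝ)}).toReal :=
  stmt_0_general μ N hN δ ε Γ hδpos hδε hε1 hΓ A hAmeas hindep hPA
end

section
/- Let S ≥ 1 and M ≥ 1 be integers and let β, Γ ∈ (0,1] be reals with Γ ≥ sqrt(2·ln(2/β) / (β² · M)). For each j = 1, …, S let N_j ≥ M be an integer and let A^j_1, …, A^j_{N_j} be mutually independent events with P(A^j_i) ≤ Γ + β/2 − βΓ/2 for all i, and let F_j be the event that at least (Γ + β/2)·N_j of the events A^j_1, …, A^j_{N_j} occur. Then the probability that at most β·S of the events F_1, …, F_S occur is at least 1 − (1/β)·exp(−β²Γ²M/2), which is at least 1/2. -/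
/-!
The collision count of object `j` is a sum of `N_j` independent indicators, each centred one
being sub-Gaussian with parameter `1/4`. Since `Γ + β/2 = p + ε` with `p = Γ + β/2 - βΓ/2` and
`ε = βΓ/2`, Hoeffding's inequality gives `P(F j) ≤ exp (-2ε²N_j) ≤ exp (-β²Γ²M/2) =: δ`, and the
lower bound on `Γ` says precisely that `δ ≤ β/2`. Markov's inequality for the number of occurring
`F j` then gives `P(#{j | F j} ≥ βS) ≤ Sδ/(βS) = δ/β ≤ 1/2`.
-/

open MeasureTheory ProbabilityTheory Real

namespace ProbabilityTheory

variable {Ω ι : Type*} [Fintype ι]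

theorem ncard_setOf_mem_eq_sum_indicator (B : ι → Set Ω) (ω : Ω) :
    (Set.ncard {i | ω ∈ B i} : ℝ) = ∑ i, (B i).indicator 1 ω := by
  classical
  simp [Set.indicator_apply, Finset.sum_boole, Set.ncard_eq_toFinset_card']

variable [MeasurableSpace Ω] {μ : Measure Ω}

theorem measurable_ncard_setOf_mem {B : ι → Set Ω} (hB : ∀ i, MeasurableSet (B i)) :
    Measurable fun ω ↦ (Set.ncard {i | ω ∈ B i} : ℝ) := by
  simp_rw [ncard_setOf_mem_eq_sum_indicator]
  exact Finset.measurable_sum _ fun i _ ↦ measurable_one.indicator (hB i)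

theorem measureReal_le_ncard_setOf_mem_le_div [IsFiniteMeasure μ] {F : ι → Set Ω}
    (hF : ∀ j, MeasurableSet (F j)) {t : ℝ} (ht : 0 < t) :
    μ.real {ω | t ≤ Set.ncard {j | ω ∈ F j}} ≤ (∑ j, μ.real (F j)) / t := by
  have hint : ∀ j, Integrable ((F j).indicator (1 : Ω → ℝ)) μ :=
    fun j ↦ (integrable_const (1 : ℝ)).indicator (hF j)
  rw [le_div_iff₀ ht, mul_comm]
  simp_rw [ncard_setOf_mem_eq_sum_indicator]
  calc t * μ.real {ω | t ≤ ∑ j, (F j).indicator 1 ω}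
      ≤ ∫ ω, ∑ j, (F j).indicator 1 ω ∂μ :=
        mul_meas_ge_le_integral_of_nonneg
          (ae_of_all _ fun ω ↦ Finset.sum_nonneg fun j _ ↦ Set.indicator_nonneg (by simp) ω)
          (integrable_finsetSum _ fun j _ ↦ hint j) t
    _ = ∑ j, μ.real (F j) := by
        rw [integral_finsetSum _ fun j _ ↦ hint j]
        simp_rw [integral_indicator_one (hF _)]

theorem one_sub_card_mul_div_le_measureReal_ncard_le [IsProbabilityMeasure μ] {F : ι → Set Ω}
    (hF : ∀ j, MeasurableSet (F j)) {δ t : ℝ} (hδ : ∀ j, μ.real (F j) ≤ δ) (ht : 0 < t) :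
    1 - Fintype.card ι * δ / t ≤ μ.real {ω | (Set.ncard {j | ω ∈ F j} : ℝ) ≤ t} := by
  have hcover : μ.real Set.univ ≤
      μ.real {ω | (Set.ncard {j | ω ∈ F j} : ℝ) ≤ t} +
        μ.real {ω | t ≤ Set.ncard {j | ω ∈ F j}} := by
    refine (measureReal_mono fun ω _ ↦ ?_).trans (measureReal_union_le _ _)
    exact le_total (Set.ncard {j | ω ∈ F j} : ℝ) t
  have hsum : ∑ j, μ.real (F j) ≤ Fintype.card ι * δ := by
    simpa using Finset.sum_le_card_nsmul Finset.univ _ _ fun j _ ↦ hδ j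
  have hmarkov := (measureReal_le_ncard_setOf_mem_le_div hF ht).trans
    (div_le_div_of_nonneg_right hsum ht.le)
  rw [probReal_univ] at hcover
  linarith

theorem hasSubgaussianMGF_indicator_sub_measureReal [IsProbabilityMeasure μ] {B : Set Ω}
    (hB : MeasurableSet B) :
    HasSubgaussianMGF (fun ω ↦ B.indicator 1 ω - μ.real B) (1 / 4) μ := by
  have h := hasSubgaussianMGF_of_mem_Icc (μ := μ) (a := 0) (b := 1)
    (measurable_one.indicator hB).aemeasurable
    (ae_of_all _ fun ω ↦ by by_cases h : ω ∈ B <;> simp [h])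
  rw [integral_indicator_one hB] at h
  convert h using 1
  norm_num

theorem measureReal_le_ncard_setOf_mem_le_exp [IsProbabilityMeasure μ] {B : ι → Set Ω}
    (hB : ∀ i, MeasurableSet (B i)) (hind : iIndepSet B μ) {p ε : ℝ} (hε : 0 ≤ ε)
    (hp : ∀ i, μ.real (B i) ≤ p) :
    μ.real {ω | (p + ε) * Fintype.card ι ≤ Set.ncard {i | ω ∈ B i}} ≤
      exp (-2 * ε ^ 2 * Fintype.card ι) := by
  have hindX : iIndepFun (fun i ω ↦ (B i).indicator 1 ω - μ.real (B i)) μ :=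
    hind.iIndepFun_indicator.comp (fun i x ↦ x - μ.real (B i)) fun i ↦ measurable_id.sub_const _
  have hsum_mean : ∑ i, μ.real (B i) ≤ Fintype.card ι * p := by
    simpa using Finset.sum_le_card_nsmul Finset.univ _ _ fun i _ ↦ hp i
  calc μ.real {ω | (p + ε) * Fintype.card ι ≤ Set.ncard {i | ω ∈ B i}}
      ≤ μ.real {ω | ε * Fintype.card ι ≤ ∑ i, ((B i).indicator 1 ω - μ.real (B i))} := by
        refine measureReal_mono fun ω hω ↦ ?_
        simp only [Set.mem_ofPred_eq, ncard_setOf_mem_eq_sum_indicator,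
          Finset.sum_sub_distrib] at hω ⊢
        linarith
    _ ≤ exp (-(ε * Fintype.card ι) ^ 2 / (2 * ((∑ _i : ι, 1 / 4 : NNReal) : ℝ))) :=
        HasSubgaussianMGF.measure_sum_ge_le_of_iIndepFun hindX
          (fun i _ ↦ hasSubgaussianMGF_indicator_sub_measureReal (hB i)) (by positivity)
    _ = exp (-2 * ε ^ 2 * Fintype.card ι) := by
        rcases (Fintype.card ι).eq_zero_or_pos with hn | hn
        · simp [hn]
        · congr 1
          simp only [Finset.sum_const, Finset.card_univ, nsmul_eq_mul]
          push_cast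
          field_simp
          ring

theorem exp_neg_le_half_of_sqrt_le {β Γ : ℝ} {M : ℕ} (hβ : 0 < β) (hM : 1 ≤ M)
    (hΓ : √(2 * log (2 / β) / (β ^ 2 * M)) ≤ Γ) :
    exp (-(β ^ 2 * Γ ^ 2 * M / 2)) ≤ β / 2 := by
  have hβM : 0 < β ^ 2 * M := by positivity
  have hlog : log (2 / β) ≤ β ^ 2 * Γ ^ 2 * M / 2 := by
    have := (Real.sqrt_le_iff.1 hΓ).2
    rw [div_le_iff₀ hβM] at this
    linarith
  calc exp (-(β ^ 2 * Γ ^ 2 * M / 2)) ≤ exp (-log (2 / β)) := exp_le_exp.2 (by linarith)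
    _ = β / 2 := by rw [exp_neg, exp_log (by positivity), inv_div]

end ProbabilityTheory

theorem stmt_4_general {Ω : Type*} [MeasurableSpace Ω] (μ : Measure Ω) [IsProbabilityMeasure μ]
    (S M : ℕ) (hS : 1 ≤ S) (hM : 1 ≤ M) (β Γ : ℝ)
    (hβpos : 0 < β) (hΓpos : 0 < Γ)
    (hΓ : Γ ≥ Real.sqrt (2 * Real.log (2 / β) / (β ^ 2 * M)))
    (N : Fin S → ℕ) (hN : ∀ j, M ≤ N j)
    (A : (j : Fin S) → Fin (N j) → Set Ω)
    (hAmeas : ∀ j i, MeasurableSet (A j i))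
    (hindep : ∀ j, iIndepSet (A j) μ)
    (hPA : ∀ j i, (μ (A j i)).toReal ≤ Γ + β / 2 - β * Γ / 2)
    (F : Fin S → Set Ω)
    (hF : ∀ j, F j =
      {ω | (Γ + β / 2) * (N j : ℝ) ≤ (Set.ncard {i : Fin (N j) | ω ∈ A j i} : ℝ)}) :
    1 - (1 / β) * Real.exp (-(β ^ 2 * Γ ^ 2 * M / 2)) ≤
        (μ {ω | (Set.ncard {j : Fin S | ω ∈ F j} : ℝ) ≤ β * S}).toReal ∧
      (1 : ℝ) / 2 ≤ 1 - (1 / β) * Real.exp (-(β ^ 2 * Γ ^ 2 * M / 2)) := by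
  set δ := exp (-(β ^ 2 * Γ ^ 2 * M / 2))
  have hδ : δ ≤ β / 2 := exp_neg_le_half_of_sqrt_le hβpos hM hΓ
  have hFδ : ∀ j, μ.real (F j) ≤ δ := fun j ↦ by
    have hHoeffding := measureReal_le_ncard_setOf_mem_le_exp (hAmeas j) (hindep j)
      (ε := β * Γ / 2) (by positivity) (hPA j)
    rw [sub_add_cancel, Fintype.card_fin] at hHoeffding
    rw [hF j]
    refine hHoeffding.trans (exp_le_exp.2 ?_)
    have : β ^ 2 * Γ ^ 2 * M ≤ β ^ 2 * Γ ^ 2 * N j := by gcongr; exact_mod_cast hN j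
    linarith
  have hFmeas : ∀ j, MeasurableSet (F j) := fun j ↦
    hF j ▸ measurableSet_le measurable_const (measurable_ncard_setOf_mem (hAmeas j))
  have hS0 : (0 : ℝ) < S := by exact_mod_cast hS
  have hmost := one_sub_card_mul_div_le_measureReal_ncard_le hFmeas hFδ (mul_pos hβpos hS0)
  have hrate : (S : ℝ) * δ / (β * S) = 1 / β * δ := by field_simp
  rw [Fintype.card_fin, hrate] at hmost
  refine ⟨hmost, ?_⟩
  have : 1 / β * δ ≤ 1 / 2 := by rw [one_div_mul_eq_div, div_le_iff₀ hβpos]; linarith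
  linarith

/-- Combined probabilistic content of part P2 of the paper's Lemma 1. -/
theorem stmt_4 {Ω : Type*} [MeasurableSpace Ω] (μ : Measure Ω) [IsProbabilityMeasure μ]
    (S M : ℕ) (hS : 1 ≤ S) (hM : 1 ≤ M) (β Γ : ℝ)
    (hβpos : 0 < β) (hβ1 : β ≤ 1) (hΓpos : 0 < Γ) (hΓ1 : Γ ≤ 1)
    (hΓ : Γ ≥ Real.sqrt (2 * Real.log (2 / β) / (β ^ 2 * M)))
    (N : Fin S → ℕ) (hN : ∀ j, M ≤ N j)
    (A : (j : Fin S) → Fin (N j) → Set Ω)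
    (hAmeas : ∀ j i, MeasurableSet (A j i))
    (hindep : ∀ j, iIndepSet (A j) μ)
    (hPA : ∀ j i, (μ (A j i)).toReal ≤ Γ + β / 2 - β * Γ / 2)
    (F : Fin S → Set Ω)
    (hF : ∀ j, F j =
      {ω | (Γ + β / 2) * (N j : ℝ) ≤ (Set.ncard {i : Fin (N j) | ω ∈ A j i} : ℝ)}) :
    1 - (1 / β) * Real.exp (-(β ^ 2 * Γ ^ 2 * M / 2)) ≤
        (μ {ω | (Set.ncard {j : Fin S | ω ∈ F j} : ℝ) ≤ β * S}).toReal ∧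
      (1 : ℝ) / 2 ≤ 1 - (1 / β) * Real.exp (-(β ^ 2 * Γ ^ 2 * M / 2)) :=
  stmt_4_general μ S M hS hM β Γ hβpos hΓpos hΓ N hN A hAmeas hindep hPA F hF
end

section
/- Let Q and X be finite nonempty subsets of ℝ^d, let N = |Q|·|X|, let 0 < δ < ε < 1 and Γ ∈ (0,1] be reals with Γ ≥ sqrt(ln(1/δ) / ((ε−δ)² · N)), and let R ≥ 0 be a real with Γdist(Q,X) ≤ R. On a probability space, let {A_{(q,x)}}_{(q,x) ∈ Q×X} be mutually independent events such that P(A_{(q,x)}) ≥ 1−δ whenever ‖q−x‖ ≤ R. Then the probability that at least (1−ε)·Γ·N of the events A_{(q,x)} occur is at least 1−δ. -/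
open MeasureTheory ProbabilityTheory

/-- The `R`-object similarity between two finite sets of feature vectors in `ℝ^d`:
the fraction of pairs `(q, x) ∈ Q × X` whose Euclidean distance is at most `R`. -/
noncomputable def sim {d : ℕ} (Q X : Finset (EuclideanSpace ℝ (Fin d))) (R : ℝ) : ℝ :=
  (Set.ncard {p : EuclideanSpace ℝ (Fin d) × EuclideanSpace ℝ (Fin d) |
      p.1 ∈ Q ∧ p.2 ∈ X ∧ dist p.1 p.2 ≤ R} : ℝ) / ((Q.card : ℝ) * (X.card : ℝ))

/-- The `Γ`-distance between two finite sets of feature vectors: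
`inf {R ≥ 0 : sim Q X R ≥ Γ}`. -/
noncomputable def gammaDist {d : ℕ} (Q X : Finset (EuclideanSpace ℝ (Fin d))) (Γ : ℝ) : ℝ :=
  sInf {R : ℝ | 0 ≤ R ∧ Γ ≤ sim Q X R}

/-!
If `Γdist(Q, X) ≤ R` then `sim(Q, X, R) ≥ Γ`: the function `r ↦ sim(Q, X, r)` is monotone and
right-continuous (only finitely many distances occur), so the infimum defining `Γdist` is attained.
Hence at least `Γ N` pairs are within distance `R`, and the number `S` of events `A_{(q,x)}`
occurring among them has mean at least `(1 - δ)` times their number. The target event can fail only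
if `S` falls below its mean by `t = (ε - δ) Γ N`, and by Hoeffding's inequality this has probability
at most `exp(-2 t² / M) ≤ exp(-(ε - δ)² Γ² N) ≤ δ`, where `M ≤ N` is the number of close pairs,
by the assumed lower bound on `Γ`.
-/

open Finset Real

theorem Set.Finite.exists_gt_disjoint_Ioo {α : Type*} [LinearOrder α] [NoMaxOrder α]
    {s : Set α} (hs : s.Finite) (a : α) : ∃ b, a < b ∧ Disjoint s (Set.Ioo a b) := by
  rcases (s ∩ Set.Ioi a).eq_empty_or_nonempty with hempty | hne
  · obtain ⟨b, hab⟩ := exists_gt a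
    exact ⟨b, hab, Set.disjoint_left.2 fun x hxs hx => hempty.subset ⟨hxs, hx.1⟩⟩
  · obtain ⟨b, ⟨-, hab⟩, hmin⟩ := Set.exists_min_image _ id (hs.inter_of_left _) hne
    exact ⟨b, hab, Set.disjoint_left.2 fun x hxs hx => (hmin x ⟨hxs, hx.1⟩).not_gt hx.2⟩

section Similarity

variable {d : ℕ} (Q X : Finset (EuclideanSpace ℝ (Fin d)))

noncomputable def closePairs (r : ℝ) : Finset (Q ×ˢ X : Finset _) :=
  univ.filter fun p => dist p.1.1 p.1.2 ≤ r

theorem closePairs_mono : Monotone (closePairs Q X) :=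
  fun _ _ hrs _ hp => by
    simp only [closePairs, mem_filter, mem_univ, true_and] at hp ⊢
    exact hp.trans hrs

theorem card_closePairs_le (r : ℝ) : #(closePairs Q X r) ≤ #Q * #X := by
  simpa only [Fintype.card_coe, card_product] using card_le_univ (closePairs Q X r)

theorem sim_eq_card_closePairs_div (r : ℝ) :
    sim Q X r = #(closePairs Q X r) / ((#Q : ℝ) * #X) := by
  have hset : {p : EuclideanSpace ℝ (Fin d) × EuclideanSpace ℝ (Fin d) |
      p.1 ∈ Q ∧ p.2 ∈ X ∧ dist p.1 p.2 ≤ r} = ↑((Q ×ˢ X).filter fun p => dist p.1 p.2 ≤ r) := by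
    ext p; simp [and_assoc]
  rw [sim, hset, Set.ncard_coe_finset, closePairs, univ_eq_attach,
    filter_attach (fun p : _ × _ => dist p.1 p.2 ≤ r), card_map,
    card_attach]

theorem sim_mono : Monotone (sim Q X) := fun r s hrs => by
  simp only [sim_eq_card_closePairs_div]
  gcongr
  exact closePairs_mono Q X hrs

theorem sim_eq_one_of_forall_dist_le (hQ : Q.Nonempty) (hX : X.Nonempty) {r : ℝ}
    (hr : ∀ p : (Q ×ˢ X : Finset _), dist p.1.1 p.1.2 ≤ r) : sim Q X r = 1 := by
  have hall : closePairs Q X r = univ := filter_true_of_mem fun p _ => hr p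
  have hpos : (0 : ℝ) < #Q * #X := by have := hQ.card_pos; have := hX.card_pos; positivity
  rw [sim_eq_card_closePairs_div, hall, card_univ, Fintype.card_coe, card_product]
  push_cast
  exact div_self hpos.ne'

theorem exists_gt_forall_lt_sim_le (R : ℝ) : ∃ R', R < R' ∧ ∀ r < R', sim Q X r ≤ sim Q X R := by
  obtain ⟨R', hRR', hdisj⟩ := (Set.finite_range fun p : (Q ×ˢ X : Finset _) =>
    dist p.1.1 p.1.2).exists_gt_disjoint_Ioo R
  refine ⟨R', hRR', fun r hr => ?_⟩
  rcases le_total r R with hrR | hRr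
  · exact sim_mono Q X hrR
  rw [sim_eq_card_closePairs_div, sim_eq_card_closePairs_div]
  gcongr
  intro p hp
  simp only [closePairs, mem_filter, mem_univ, true_and] at hp ⊢
  by_contra! hRp
  exact Set.disjoint_left.1 hdisj ⟨p, rfl⟩ ⟨hRp, hp.trans_lt hr⟩

theorem le_sim_of_gammaDist_le (hQ : Q.Nonempty) (hX : X.Nonempty) {Γ R : ℝ} (hΓ1 : Γ ≤ 1)
    (hdist : gammaDist Q X Γ ≤ R) : Γ ≤ sim Q X R := by
  obtain ⟨r₀, hr₀⟩ := (Set.finite_range fun p : (Q ×ˢ X : Finset _) => dist p.1.1 p.1.2).bddAbove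
  have hne : {r : ℝ | 0 ≤ r ∧ Γ ≤ sim Q X r}.Nonempty :=
    ⟨max r₀ 0, le_max_right _ _, by
      rw [sim_eq_one_of_forall_dist_le Q X hQ hX fun p => (hr₀ ⟨p, rfl⟩).trans (le_max_left _ _)]
      exact hΓ1⟩
  by_contra! hlt
  obtain ⟨R', hRR', hsim⟩ := exists_gt_forall_lt_sim_le Q X R
  have hR' : R' ≤ gammaDist Q X Γ := le_csInf hne fun r ⟨_, hr⟩ =>
    le_of_not_gt fun hrR' => (hsim r hrR').not_gt (hlt.trans_le hr)
  linarith

theorem mul_card_le_card_closePairs (hQ : Q.Nonempty) (hX : X.Nonempty) {Γ R : ℝ} (hΓ1 : Γ ≤ 1)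
    (hdist : gammaDist Q X Γ ≤ R) : Γ * (#Q * #X : ℕ) ≤ #(closePairs Q X R) := by
  have hpos : (0 : ℝ) < #Q * #X := by have := hQ.card_pos; have := hX.card_pos; positivity
  have := le_sim_of_gammaDist_le Q X hQ hX hΓ1 hdist
  rw [sim_eq_card_closePairs_div, le_div_iff₀ hpos] at this
  exact_mod_cast this

end Similarity

theorem ProbabilityTheory.iIndepSet.measureReal_sum_indicator_le_sum_sub_le {Ω ι : Type*}
    [MeasurableSpace Ω] {μ : Measure Ω} [IsProbabilityMeasure μ] {A : ι → Set Ω}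
    (hA : iIndepSet A μ) (hmeas : ∀ i, MeasurableSet (A i)) (s : Finset ι) {t : ℝ}
    (ht : 0 ≤ t) :
    μ.real {ω | ∑ i ∈ s, (A i).indicator 1 ω ≤ ∑ i ∈ s, μ.real (A i) - t} ≤
      exp (-2 * t ^ 2 / #s) := by
  let Y : ι → Ω → ℝ := fun i ω => μ.real (A i) - (A i).indicator 1 ω
  have hY : iIndepFun Y μ := hA.iIndepFun_indicator.comp (fun i x => μ.real (A i) - x)
    fun _ => measurable_const.sub measurable_id
  have hsubG : ∀ i ∈ s, HasSubgaussianMGF (Y i) ((‖(1 : ℝ) - 0‖₊ / 2) ^ 2) μ := by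
    intro i _
    have hIcc : ∀ ω, (A i).indicator (1 : Ω → ℝ) ω ∈ Set.Icc (0 : ℝ) 1 := fun ω => by
      by_cases hω : ω ∈ A i <;> simp [hω]
    have hHoeffding := hasSubgaussianMGF_of_mem_Icc (μ := μ) (X := (A i).indicator 1)
      (measurable_const.indicator (hmeas i)).aemeasurable (ae_of_all _ hIcc)
    convert hHoeffding.neg using 1
    ext ω
    simp [Y, integral_indicator_one (hmeas i)]
  have hset : {ω | ∑ i ∈ s, (A i).indicator 1 ω ≤ ∑ i ∈ s, μ.real (A i) - t} =
      {ω | t ≤ ∑ i ∈ s, Y i ω} := by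
    ext ω
    simp only [Set.mem_ofPred_eq, Y, Finset.sum_sub_distrib]
    constructor <;> intro h <;> linarith
  rw [hset]
  convert HasSubgaussianMGF.measure_sum_ge_le_of_iIndepFun hY hsubG ht using 2
  simp only [sub_zero, nnnorm_one, one_div, inv_pow, sum_const, nsmul_eq_mul, NNReal.coe_mul,
    NNReal.coe_natCast, NNReal.coe_inv, NNReal.coe_pow, NNReal.coe_ofNat]
  ring

theorem sum_indicator_one_le_ncard {ι Ω : Type*} [Finite ι] (A : ι → Set Ω) (s : Finset ι)
    (ω : Ω) : ∑ i ∈ s, (A i).indicator (1 : Ω → ℝ) ω ≤ {i | ω ∈ A i}.ncard := by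
  classical
  simp only [Set.indicator_apply, Pi.one_apply, Finset.sum_boole, Nat.cast_le]
  rw [← Set.ncard_coe_finset, Finset.coe_filter]
  exact Set.ncard_le_ncard (fun i hi => hi.2)

theorem one_sub_probReal_compl_le {Ω : Type*} [MeasurableSpace Ω] {μ : Measure Ω}
    [IsProbabilityMeasure μ] (s : Set Ω) : 1 - μ.real sᶜ ≤ μ.real s := by
  have := measureReal_union_le (μ := μ) s sᶜ
  rw [Set.union_compl_self, probReal_univ] at this
  linarith

theorem exp_neg_two_mul_sq_div_le {δ a M N : ℝ} (hδ : 0 < δ) (hM : 0 < M) (hMN : M ≤ N)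
    (h : log (1 / δ) ≤ a ^ 2 / N) : exp (-2 * a ^ 2 / M) ≤ δ := by
  rw [← le_log_iff_exp_le hδ]
  have hNM : a ^ 2 / N ≤ a ^ 2 / M := div_le_div_of_nonneg_left (sq_nonneg a) hM hMN
  have hlog : log (1 / δ) = -log δ := by rw [one_div, log_inv]
  have : -2 * a ^ 2 / M = -2 * (a ^ 2 / M) := by ring
  linarith [div_nonneg (sq_nonneg a) (hM.le.trans hMN)]

theorem stmt_7_general {d : ℕ} {Ω : Type*} [MeasurableSpace Ω] (μ : Measure Ω)
    [IsProbabilityMeasure μ]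
    (Q X : Finset (EuclideanSpace ℝ (Fin d))) (hQ : Q.Nonempty) (hX : X.Nonempty)
    (δ ε Γ : ℝ) (hδpos : 0 < δ) (hδε : δ < ε) (hε1 : ε < 1)
    (hΓpos : 0 < Γ) (hΓ1 : Γ ≤ 1)
    (hΓ : Γ ≥ Real.sqrt (Real.log (1 / δ) / ((ε - δ) ^ 2 * (Q.card * X.card : ℕ))))
    (R : ℝ) (hdist : gammaDist Q X Γ ≤ R)
    (A : (Q ×ˢ X : Finset _) → Set Ω)
    (hAmeas : ∀ p, MeasurableSet (A p))
    (hindep : iIndepSet A μ)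
    (hPA : ∀ p : (Q ×ˢ X : Finset _), dist p.1.1 p.1.2 ≤ R → 1 - δ ≤ (μ (A p)).toReal) :
    1 - δ ≤
      (μ {ω | (1 - ε) * Γ * ((Q.card * X.card : ℕ) : ℝ) ≤
        (Set.ncard {p : (Q ×ˢ X : Finset _) | ω ∈ A p} : ℝ)}).toReal := by
  set N : ℝ := ((Q.card * X.card : ℕ) : ℝ)
  set T := closePairs Q X R
  set t := (ε - δ) * Γ * N
  set E := {ω | (1 - ε) * Γ * N ≤ (Set.ncard {p : (Q ×ˢ X : Finset _) | ω ∈ A p} : ℝ)}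
  have hN : 0 < N := by have := hQ.card_pos; have := hX.card_pos; positivity
  have hΓT : Γ * N ≤ #T := mul_card_le_card_closePairs Q X hQ hX hΓ1 hdist
  have hT : (0 : ℝ) < #T := (mul_pos hΓpos hN).trans_le hΓT
  have hlog : log (1 / δ) ≤ t ^ 2 / N := by
    have := (sqrt_le_iff.1 hΓ).2
    rw [div_le_iff₀ (by have := sub_pos.2 hδε; positivity)] at this
    calc log (1 / δ) ≤ Γ ^ 2 * ((ε - δ) ^ 2 * N) := this
      _ = t ^ 2 / N := by rw [eq_div_iff hN.ne']; ring
  have hmean : (1 - δ) * #T ≤ ∑ p ∈ T, μ.real (A p) := by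
    rw [mul_comm, ← nsmul_eq_mul, ← sum_const]
    exact sum_le_sum fun p hp => hPA p (mem_filter.1 hp).2
  have hEc : Eᶜ ⊆ {ω | ∑ p ∈ T, (A p).indicator 1 ω ≤ ∑ p ∈ T, μ.real (A p) - t} := by
    intro ω hω
    have hcount := sum_indicator_one_le_ncard A T ω
    have := mul_le_mul_of_nonneg_left hΓT (sub_nonneg.2 (hδε.trans hε1).le)
    simp only [E, Set.mem_compl_iff, Set.mem_ofPred_eq, not_le] at hω ⊢
    linarith
  have ht : 0 ≤ t := by have := sub_pos.2 hδε; positivity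
  have hEc_le : μ.real Eᶜ ≤ δ := (measureReal_mono hEc).trans <|
    (hindep.measureReal_sum_indicator_le_sum_sub_le hAmeas T ht).trans <|
      exp_neg_two_mul_sq_div_le hδpos hT (Nat.cast_le.2 (card_closePairs_le Q X R)) hlog
  rw [← measureReal_def]
  linarith [one_sub_probReal_compl_le (μ := μ) E]

/-- Part P1 of the paper's Lemma 1 with the LSH collision events abstracted. -/
theorem stmt_7 {d : ℕ} {Ω : Type*} [MeasurableSpace Ω] (μ : Measure Ω)
    [IsProbabilityMeasure μ]
    (Q X : Finset (EuclideanSpace ℝ (Fin d))) (hQ : Q.Nonempty) (hX : X.Nonempty)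
    (δ ε Γ : ℝ) (hδpos : 0 < δ) (hδε : δ < ε) (hε1 : ε < 1)
    (hΓpos : 0 < Γ) (hΓ1 : Γ ≤ 1)
    (hΓ : Γ ≥ Real.sqrt (Real.log (1 / δ) / ((ε - δ) ^ 2 * (Q.card * X.card : ℕ))))
    (R : ℝ) (hR : 0 ≤ R) (hdist : gammaDist Q X Γ ≤ R)
    (A : (Q ×ˢ X : Finset _) → Set Ω)
    (hAmeas : ∀ p, MeasurableSet (A p))
    (hindep : iIndepSet A μ)
    (hPA : ∀ p : (Q ×ˢ X : Finset _), dist p.1.1 p.1.2 ≤ R → 1 - δ ≤ (μ (A p)).toReal) :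
    1 - δ ≤
      (μ {ω | (1 - ε) * Γ * ((Q.card * X.card : ℕ) : ℝ) ≤
        (Set.ncard {p : (Q ×ˢ X : Finset _) | ω ∈ A p} : ℝ)}).toReal :=
  stmt_7_general μ Q X hQ hX δ ε Γ hδpos hδε hε1 hΓpos hΓ1 hΓ R hdist A hAmeas hindep hPA
end
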